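/- Inscribed polygon setup: let n ≥ 3, o : E, ρ > 0, and let α : Fin n → ℝ be strictly increasing with α (n−1) − α 0 < 2π; define vertices v : ZMod n → E by v k = o + ρ • (Real.cos (α k̄), Real.sin (α k̄)), where k̄ ∈ {0, …, n−1} is the canonical representative of k. Suppose that every edge has a parallel edge of equal length with opposite orientation: for every i : ZMod n there exists j : ZMod n with j ≠ i such that v (j+1) − v j = −(v (i+1) − v i). Then the point reflection about o maps the vertex set onto itself: (Equiv.pointReflection o) '' Set.range v = Set.range v. -/

import Mathlib

/-! Given an edge `v i → v (i+1)` and an edge `v j → v (j+1)` opposite to it, the diagonals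
`v i v j` and `v (i+1) v (j+1)` share their midpoint `m`. Reflecting the circumcircle in `m` gives
a circle of the same radius through all four vertices. If `m` were not the center `o`, these would
be two distinct circles, which meet in at most two points, so `v (j+1)` would be `v i` or `v j`;
for `n ≥ 3` distinct vertices this is impossible. Hence `m = o`, i.e. `v j` is the reflection of
`v i` in `o`. -/

noncomputable abbrev E : Type := EuclideanSpace ℝ (Fin 2)

open EuclideanGeometry Module Real Set

theorem Function.Involutive.image_eq_of_mapsTo {α : Type*} {f : α → α} (hf : f.Involutive)
    {s : Set α} (h : MapsTo f s s) : f '' s = s :=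
  SurjOn.image_eq_of_mapsTo (fun x hx ↦ ⟨f x, h hx, hf x⟩) h

theorem ZMod.natCast_ne_zero_of_pos_of_lt {n k : ℕ} (hk : 0 < k) (hkn : k < n) :
    (k : ZMod n) ≠ 0 := by
  rw [Ne, ZMod.natCast_eq_zero_iff]
  exact Nat.not_dvd_of_pos_of_lt hk hkn

section

variable {V P : Type*} [NormedAddCommGroup V] [InnerProductSpace ℝ V] [MetricSpace P]
  [NormedAddTorsor V P] [FiniteDimensional ℝ V]

theorem pointReflection_eq_or_of_midpoint_eq_midpoint (hd : finrank ℝ V = 2) {S : Sphere P}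
    {p q r s : P} (hp : p ∈ S) (hq : q ∈ S) (hr : r ∈ S) (hs : s ∈ S) (hpr : p ≠ r)
    (h : midpoint ℝ r p = midpoint ℝ s q) :
    Equiv.pointReflection S.center r = p ∨ (q = p ∧ s = r) ∨ (q = r ∧ s = p) := by
  rw [← midpoint_eq_iff' ℝ]
  by_cases hc : midpoint ℝ r p = S.center
  · exact Or.inl hc
  right
  let σ := AffineIsometryEquiv.pointReflection ℝ (midpoint ℝ r p)
  let S' : Sphere P := ⟨σ S.center, S.radius⟩
  have hSS' : S ≠ S' := fun hS ↦ hc <|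
    (AffineIsometryEquiv.pointReflection_fixed_iff.mp (congrArg Sphere.center hS).symm).symm
  have mem_S' {x y : P} (hx : x ∈ S) (hxy : σ x = y) : y ∈ S' := by
    rw [mem_sphere, ← hxy, σ.dist_map]
    exact hx
  have hp' : p ∈ S' := mem_S' hr (AffineIsometryEquiv.pointReflection_midpoint_left r p)
  have hr' : r ∈ S' := mem_S' hp (AffineIsometryEquiv.pointReflection_midpoint_right r p)
  have hq' : q ∈ S' := mem_S' hs (by
    simp only [σ, h, AffineIsometryEquiv.pointReflection_midpoint_left])
  rcases eq_of_mem_sphere_of_mem_sphere_of_finrank_eq_two hd hSS' hpr hp hr hq hp' hr' hq' with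
    rfl | rfl
  all_goals rw [midpoint_eq_midpoint_iff_vsub_eq_vsub] at h
  · exact Or.inl ⟨rfl, (vsub_eq_zero_iff_eq.mp (h.trans (vsub_self _))).symm⟩
  · exact Or.inr ⟨rfl, vsub_right_cancel h⟩

end

noncomputable def polarPoint (o : E) (ρ θ : ℝ) : E :=
  o + ρ • (WithLp.equiv 2 (Fin 2 → ℝ)).symm ![cos θ, sin θ]

theorem dist_polarPoint (o : E) (ρ θ : ℝ) : dist (polarPoint o ρ θ) o = |ρ| := by
  simp [polarPoint, dist_eq_norm, norm_smul, EuclideanSpace.norm_eq, Fin.sum_univ_two]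

theorem polarPoint_injOn_Icc (o : E) {ρ a b : ℝ} (hρ : ρ ≠ 0) (hab : b - a < 2 * π) :
    InjOn (polarPoint o ρ) (Icc a b) := by
  intro x hx y hy hxy
  have hvec := smul_right_injective E hρ (add_left_cancel hxy)
  have hcos : cos x = cos y := by simpa using congrArg (· 0) hvec
  have hsin : sin x = sin y := by simpa using congrArg (· 1) hvec
  refine Circle.exp_injOn_Icc hab hx hy (Circle.ext (Complex.ext ?_ ?_)) <;>
    simpa [Circle.coe_exp, Complex.exp_ofReal_mul_I_re, Complex.exp_ofReal_mul_I_im]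

/-- A polygon inscribed in a circle, each of whose edges has a parallel edge of equal
length (with opposite orientation), is skew symmetric: its vertex set is mapped onto
itself by the point reflection about the center. -/
theorem inscribed_polygon_parallel_edges_skew_symmetric
    (n : ℕ) (hn : 3 ≤ n) (o : E) (ρ : ℝ) (hρ : 0 < ρ)
    (α : Fin n → ℝ) (hα : StrictMono α)
    (hspan : α ⟨n - 1, by omega⟩ - α ⟨0, by omega⟩ < 2 * Real.pi)
    (v : ZMod n → E)
    (hv : ∀ k : Fin n, v ((k : ℕ) : ZMod n) =
      o + ρ • (WithLp.equiv 2 (Fin 2 → ℝ)).symm ![Real.cos (α k), Real.sin (α k)])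
    (hpar : ∀ i : ZMod n, ∃ j : ZMod n, j ≠ i ∧ v (j + 1) - v j = -(v (i + 1) - v i)) :
    (Equiv.pointReflection o) '' Set.range v = Set.range v := by
  have : NeZero n := ⟨by omega⟩
  let S : Sphere E := ⟨o, ρ⟩
  let θ : ZMod n → ℝ := fun i ↦ α ⟨i.val, i.val_lt⟩
  have hvθ (i : ZMod n) : v i = polarPoint o ρ (θ i) := by
    have h := hv ⟨i.val, i.val_lt⟩
    rwa [Fin.val_mk, ZMod.natCast_zmod_val] at h
  have hmem (i : ZMod n) : v i ∈ S := by
    rw [mem_sphere, hvθ, dist_polarPoint, abs_of_pos hρ]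
  have hθ (i : ZMod n) : θ i ∈ Icc (α ⟨0, by omega⟩) (α ⟨n - 1, by omega⟩) :=
    ⟨hα.monotone (Nat.zero_le _), hα.monotone (Nat.le_sub_one_of_lt i.val_lt)⟩
  have hinj : Function.Injective v := fun i j hij ↦ by
    have := polarPoint_injOn_Icc o hρ.ne' hspan (hθ i) (hθ j) (by rw [← hvθ, ← hvθ, hij])
    exact ZMod.val_injective n (Fin.mk.inj_iff.mp (hα.injective this))
  have hrefl (i : ZMod n) : Equiv.pointReflection o (v i) ∈ range v := by
    obtain ⟨j, hji, hedge⟩ := hpar i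
    have hmid : midpoint ℝ (v i) (v j) = midpoint ℝ (v (i + 1)) (v (j + 1)) := by
      rw [midpoint_eq_midpoint_iff_vsub_eq_vsub, vsub_eq_sub, vsub_eq_sub, hedge, neg_sub]
    rcases pointReflection_eq_or_of_midpoint_eq_midpoint finrank_euclideanSpace_fin (hmem j)
      (hmem (j + 1)) (hmem i) (hmem (i + 1)) (hinj.ne hji) hmid with h | ⟨h, -⟩ | ⟨h, h'⟩
    · exact ⟨j, h.symm⟩
    · refine absurd ?_ (ZMod.natCast_ne_zero_of_pos_of_lt one_pos (by omega : 1 < n))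
      linear_combination hinj h
    · refine absurd ?_ (ZMod.natCast_ne_zero_of_pos_of_lt two_pos (by omega : 2 < n))
      linear_combination hinj h + hinj h'
  exact (Equiv.pointReflection_involutive o).image_eq_of_mapsTo (by
    rintro _ ⟨i, rfl⟩
    exact hrefl i)
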